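/- arXiv:2007.09599 — 3 statements merged into one kernel-verified Lean document; each statement's English description precedes it below -/
import Mathlib

section
/- Let f(x) = sign( Σ_{i=1}^n w_i x_i − θ ) be an LTF on {−1,1}^n with w_1, …, w_n ≥ 0. Then for all i ≠ j ∈ [n], if w_i ≥ w_j then f◇(i) ≥ f◇(j), where f◇(i) denotes the i-th Shapley index of f. -/
open Finset MeasureTheory

noncomputable section

/-- The sign function: `+1` on nonnegative reals, `-1` otherwise. -/
def sgn (t : ℝ) : ℝ := if 0 ≤ t then 1 else -1

/-- View a Boolean point of the hypercube as a point of `{-1,1}^n ⊆ ℝ^n`. -/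
def toSigns {n : ℕ} (x : Fin n → Bool) : Fin n → ℝ := fun i => if x i then 1 else -1

/-- Expectation under the uniform distribution on `{-1,1}^n`. -/
def unifExp {n : ℕ} (F : (Fin n → ℝ) → ℝ) : ℝ :=
  ((2 : ℝ) ^ n)⁻¹ * ∑ x : Fin n → Bool, F (toSigns x)

/-- Degree-1 Chow parameters (degree-1 Fourier coefficients). -/
def chow {n : ℕ} (f : (Fin n → ℝ) → ℝ) (i : Fin n) : ℝ := unifExp (fun x => f x * x i)

/-- Extended Chow parameters indexed by `{0,1,…,n}`; index `0` is the constant coefficient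
and index `i+1` corresponds to coordinate `i`. -/
def chowE {n : ℕ} (f : (Fin n → ℝ) → ℝ) (j : Fin (n + 1)) : ℝ :=
  unifExp (fun x => f x * Fin.cases (motive := fun _ => ℝ) 1 x j)

/-- Partial Chow distance with respect to a set `S ⊆ {0,1,…,n}` of indices. -/
def dPC {n : ℕ} (S : Finset (Fin (n + 1))) (f g : (Fin n → ℝ) → ℝ) : ℝ :=
  Real.sqrt (∑ j ∈ S, (chowE f j - chowE g j) ^ 2)

/-- `g` is a linear threshold function. -/
def IsLTF {n : ℕ} (g : (Fin n → ℝ) → ℝ) : Prop :=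
  ∃ (w : Fin n → ℝ) (θ : ℝ), ∀ x, g x = sgn (∑ i, w i * x i - θ)

/-- `g` is a junta over the coordinates in `H`. -/
def JuntaOn {n : ℕ} (H : Finset (Fin n)) (g : (Fin n → ℝ) → ℝ) : Prop :=
  ∀ x y : Fin n → ℝ, (∀ i ∈ H, x i = y i) → g x = g y

/-- The restriction of `w` to the coordinates in `T` is a nonzero `τ`-regular vector,
i.e. `‖w_T‖_∞ / ‖w_T‖₂ ≤ τ`. -/
def RegularOn {n : ℕ} (T : Finset (Fin n)) (w : Fin n → ℝ) (τ : ℝ) : Prop :=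
  (∃ i ∈ T, w i ≠ 0) ∧ ∀ i ∈ T, |w i| ≤ τ * Real.sqrt (∑ j ∈ T, w j ^ 2)

/-- The point `x(π,i)`: `+1` in coordinates `j` with `π j < π i`, `-1` elsewhere. -/
def pivX {n : ℕ} (π : Equiv.Perm (Fin n)) (i : Fin n) : Fin n → ℝ :=
  fun j => if π j < π i then 1 else -1

/-- The point `x⁺(π,i)`: `x(π,i)` with coordinate `i` flipped to `+1`. -/
def pivXp {n : ℕ} (π : Equiv.Perm (Fin n)) (i : Fin n) : Fin n → ℝ :=
  Function.update (pivX π i) i 1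

/-- The `i`-th (generalized) Shapley index of `f`. -/
def shapley {n : ℕ} (f : (Fin n → ℝ) → ℝ) (i : Fin n) : ℝ :=
  ((n.factorial : ℝ))⁻¹ * ∑ π : Equiv.Perm (Fin n), (f (pivXp π i) - f (pivX π i))

/-- Shapley distance between `f` and `g`. -/
def dShapley {n : ℕ} (f g : (Fin n → ℝ) → ℝ) : ℝ :=
  Real.sqrt (∑ i : Fin n, (shapley f i - shapley g i) ^ 2)

/-- The probability weight of `x` under the `p`-biased product distribution `u_p^n`. -/
def pwt (p : ℝ) {n : ℕ} (x : Fin n → Bool) : ℝ := ∏ i, (if x i then p else 1 - p)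

/-- Expectation under the `p`-biased product distribution `u_p^n` on `{-1,1}^n`. -/
def pExp (p : ℝ) {n : ℕ} (F : (Fin n → ℝ) → ℝ) : ℝ :=
  ∑ x : Fin n → Bool, pwt p x * F (toSigns x)

/-- Probability of an event under the `p`-biased product distribution `u_p^n`. -/
def pProb (p : ℝ) {n : ℕ} (E : Set (Fin n → ℝ)) : ℝ :=
  ∑ x : Fin n → Bool, pwt p x * Set.indicator E (fun _ => (1 : ℝ)) (toSigns x)

/-- `μ_p = 2p - 1`. -/
def muP (p : ℝ) : ℝ := 2 * p - 1

/-- `σ_p = 2√(p(1-p))`. -/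
def sigmaP (p : ℝ) : ℝ := 2 * Real.sqrt (p * (1 - p))

/-- `ψ_p(x) = (x - μ_p)/σ_p`. -/
def psiP (p x : ℝ) : ℝ := (x - muP p) / sigmaP p

/-- The `p`-biased degree-1 Fourier coefficient `f̂(i,p)`. -/
def pChow (p : ℝ) {n : ℕ} (f : (Fin n → ℝ) → ℝ) (i : Fin n) : ℝ :=
  pExp p (fun x => f x * psiP p (x i))

/-- `ψ_p^{[w_T]}(t) = (t - μ_p·Σ_{i∈T} w_i)/(σ_p·‖w_T‖₂)`. -/
def psiW (p : ℝ) {n : ℕ} (T : Finset (Fin n)) (w : Fin n → ℝ) (t : ℝ) : ℝ :=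
  (t - muP p * ∑ i ∈ T, w i) / (sigmaP p * Real.sqrt (∑ i ∈ T, w i ^ 2))

/-- The standard Gaussian density `φ`. -/
def gaussPhi (x : ℝ) : ℝ := (Real.sqrt (2 * Real.pi))⁻¹ * Real.exp (-(x ^ 2) / 2)

/-- The standard Gaussian cumulative distribution function `Φ`. -/
def gaussCdf (t : ℝ) : ℝ := ∫ x in Set.Iic t, gaussPhi x

/-- `m(θ) = 1 - 2Φ(θ) = E_{x∼N(0,1)}[sign(x-θ)]`. -/
def mFun (θ : ℝ) : ℝ := 1 - 2 * gaussCdf θ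

open Classical in
/-- `W(ν) = (2φ(m⁻¹(ν)))²`, extended by `0` off the range of `m`. -/
def WFun (ν : ℝ) : ℝ :=
  if h : ∃ θ : ℝ, mFun θ = ν then (2 * gaussPhi (Classical.choose h)) ^ 2 else 0

/-- `Λ(n) = Σ_{0<k<n} (1/k + 1/(n-k))`. -/
def LambdaN (n : ℕ) : ℝ := ∑ k ∈ Finset.Ioo 0 n, ((k : ℝ)⁻¹ + ((n : ℝ) - (k : ℝ))⁻¹)

/-- The probability weight of a point of the cube under the Shapley distribution `D_Shap`. -/
def shapWt {n : ℕ} (x : Fin n → Bool) : ℝ :=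
  if (Finset.univ.filter (fun i => x i = true)).card = 0 ∨
     (Finset.univ.filter (fun i => x i = true)).card = n then 0
  else (((Finset.univ.filter (fun i => x i = true)).card : ℝ)⁻¹ +
        ((n : ℝ) - ((Finset.univ.filter (fun i => x i = true)).card : ℝ))⁻¹) /
       (LambdaN n * ((n.choose (Finset.univ.filter (fun i => x i = true)).card : ℕ) : ℝ))

/-- Expectation under the Shapley distribution `D_Shap`. -/
def shapExp {n : ℕ} (F : (Fin n → ℝ) → ℝ) : ℝ :=
  ∑ x : Fin n → Bool, shapWt x * F (toSigns x)

/-- Probability of an event under the Shapley distribution `D_Shap`. -/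
def shapProb {n : ℕ} (E : Set (Fin n → ℝ)) : ℝ :=
  ∑ x : Fin n → Bool, shapWt x * Set.indicator E (fun _ => (1 : ℝ)) (toSigns x)

end

noncomputable section

lemma sgn_mono {t s : ℝ} (h : t ≤ s) : sgn t ≤ sgn s := by
  unfold sgn
  split_ifs with h1 h2 <;> try norm_num
  exact absurd (h1.trans h) h2

lemma sgn_key (S wi wj θ a : ℝ) (h : wj ≤ wi) (ha : a = 1 ∨ a = -1) :
    sgn (wi * a + wj * 1 + S - θ) - sgn (wi * a + wj * (-1) + S - θ) ≤
      sgn (wi * 1 + wj * a + S - θ) - sgn (wi * (-1) + wj * a + S - θ) := by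
  rcases ha with h1 | h1 <;> subst h1
  · have h2 : sgn (wi * (-1) + wj * 1 + S - θ) ≤ sgn (wi * 1 + wj * (-1) + S - θ) :=
      sgn_mono (by linarith)
    linarith
  · have h2 : sgn (wi * (-1) + wj * 1 + S - θ) ≤ sgn (wi * 1 + wj * (-1) + S - θ) :=
      sgn_mono (by linarith)
    linarith

/-- Shapley indices are monotone in the weights of a nonnegative LTF. -/
theorem shapley_monotone_in_weights :
    ∀ (n : ℕ) (w : Fin n → ℝ) (θ : ℝ) (f : (Fin n → ℝ) → ℝ),
      (∀ i, 0 ≤ w i) →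
      (∀ x, f x = sgn (∑ i, w i * x i - θ)) →
      ∀ i j : Fin n, i ≠ j → w j ≤ w i → shapley f j ≤ shapley f i := by
  intro n w θ f hw hf i j hij hwij
  unfold shapley
  apply mul_le_mul_of_nonneg_left _ (by positivity)
  rw [← Equiv.sum_comp (Equiv.mulRight (Equiv.swap i j))
    (fun π => f (pivXp π i) - f (pivX π i))]
  apply Finset.sum_le_sum
  intro π _
  simp only [Equiv.coe_mulRight]
  set σ : Equiv.Perm (Fin n) := π * Equiv.swap i j with hσ
  have hσi : σ i = π j := by simp [hσ, Equiv.Perm.mul_apply]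
  have hσj : σ j = π i := by simp [hσ, Equiv.Perm.mul_apply]
  have hσk : ∀ k, k ≠ i → k ≠ j → σ k = π k := by
    intro k hki hkj
    simp [hσ, Equiv.Perm.mul_apply, Equiv.swap_apply_of_ne_of_ne hki hkj]
  set a : ℝ := if π i < π j then 1 else -1 with ha
  have hT : j ∈ Finset.univ.erase i := Finset.mem_erase.mpr ⟨hij.symm, Finset.mem_univ j⟩
  set T : Finset (Fin n) := (Finset.univ.erase i).erase j with hTdef
  have hsplit : ∀ x : Fin n → ℝ,
      ∑ k, w k * x k = w i * x i + (w j * x j + ∑ k ∈ T, w k * x k) := by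
    intro x
    rw [← Finset.add_sum_erase _ _ (Finset.mem_univ i), ← Finset.add_sum_erase _ _ hT]
  have hTk : ∀ x₁ x₂ : Fin n → ℝ, (∀ k ∈ T, x₁ k = x₂ k) →
      ∑ k ∈ T, w k * x₁ k = ∑ k ∈ T, w k * x₂ k := by
    intro x₁ x₂ h
    exact Finset.sum_congr rfl fun k hk => by rw [h k hk]
  -- describe membership in T
  have hmemT : ∀ k ∈ T, k ≠ i ∧ k ≠ j := by
    intro k hk
    rw [hTdef, Finset.mem_erase, Finset.mem_erase] at hk
    exact ⟨hk.2.1, hk.1⟩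
  set S : ℝ := ∑ k ∈ T, w k * (if π k < π j then (1 : ℝ) else -1) with hS
  -- values of the four points
  have e1 : ∑ k, w k * pivX π j k = w i * a + w j * (-1) + S := by
    rw [hsplit]
    have h1 : pivX π j i = a := rfl
    have h2 : pivX π j j = -1 := by simp [pivX]
    rw [h1, h2, hS]
    rw [hTk (pivX π j) (fun k => if π k < π j then (1:ℝ) else -1) (fun k _ => rfl)]
    ring
  have e2 : ∑ k, w k * pivXp π j k = w i * a + w j * 1 + S := by
    rw [hsplit]
    have h1 : pivXp π j i = a := by
      simp [pivXp, Function.update_of_ne hij]; rfl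
    have h2 : pivXp π j j = 1 := by simp [pivXp]
    rw [h1, h2, hS]
    rw [hTk (pivXp π j) (fun k => if π k < π j then (1:ℝ) else -1)
      (fun k hk => by simp [pivXp, Function.update_of_ne (hmemT k hk).2]; rfl)]
    ring
  have e3 : ∑ k, w k * pivX σ i k = w i * (-1) + w j * a + S := by
    rw [hsplit]
    have h1 : pivX σ i i = -1 := by simp [pivX]
    have h2 : pivX σ i j = a := by simp [pivX, hσi, hσj, ha]
    rw [h1, h2, hS]
    rw [hTk (pivX σ i) (fun k => if π k < π j then (1:ℝ) else -1)
      (fun k hk => by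
        obtain ⟨hki, hkj⟩ := hmemT k hk
        simp [pivX, hσi, hσk k hki hkj])]
    ring
  have e4 : ∑ k, w k * pivXp σ i k = w i * 1 + w j * a + S := by
    rw [hsplit]
    have h1 : pivXp σ i i = 1 := by simp [pivXp]
    have h2 : pivXp σ i j = a := by
      simp [pivXp, Function.update_of_ne hij.symm, pivX, hσi, hσj, ha]
    rw [h1, h2, hS]
    rw [hTk (pivXp σ i) (fun k => if π k < π j then (1:ℝ) else -1)
      (fun k hk => by
        obtain ⟨hki, hkj⟩ := hmemT k hk
        simp [pivXp, Function.update_of_ne hki, pivX, hσi, hσk k hki hkj])]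
    ring
  rw [hf, hf, hf, hf, e1, e2, e3, e4]
  exact sgn_key S (w i) (w j) θ a hwij (by rw [ha]; split_ifs <;> simp)

end
end

section
/- For every constant c > 1 there is a constant C = C(c) > 0 such that the following holds. Let n ≥ 2, δ = n^{−c}, and let f: {−1,1}^n → ℝ satisfy ‖f‖_∞ ≤ 1 and f((−1)^n) = f(1^n) = 0. Then | E_{x∼D_Shap}[ f(x) ] − ∫_δ^{1−δ} ( (1/p + 1/(1−p)) / Λ(n) )·E_{x∼u_p^n}[ f(x) ] dp | ≤ C·n·δ / Λ(n). -/
open Finset MeasureTheory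

/-!
For a point `x` of the cube with `k` coordinates equal to `+1`, `0 < k < n`, the Shapley weight is
a Beta integral: `Λ(n) · D_Shap(x) = B(k, n - k) = ∫₀¹ (1/p + 1/(1-p)) p^k (1-p)^(n-k) dp`.
So `D_Shap` is the mixture of the `u_p^n` with density `(1/p + 1/(1-p))/Λ(n)` on `(0,1)`; this
mixture puts infinite mass on the two constant points, which is why `f` must vanish there.
Truncating the mixture to `[δ, 1-δ]` loses at most `(δ^k + δ^(n-k))/Λ(n)` at `x`, and summing over
the cube gives `2((1+δ)^n - 1)/Λ(n) ≤ 4nδ/Λ(n)` as soon as `nδ ≤ 1`.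
-/

open scoped Nat

section Cube

variable {ι : Type*} [Fintype ι]

def numTrue (x : ι → Bool) : ℕ := #{i | x i = true}

theorem prod_ite_eq_pow_mul_pow {M : Type*} [CommMonoid M] (x : ι → Bool) (a b : M) :
    ∏ i, (if x i then a else b) = a ^ numTrue x * b ^ (Fintype.card ι - numTrue x) := by
  have hcard := card_filter_add_card_filter_not (s := univ) (fun i => x i = true)
  rw [Finset.card_univ] at hcard
  rw [prod_ite, prod_const, prod_const, numTrue, ← hcard, Nat.add_sub_cancel_left]

theorem sum_pow_numTrue_mul_pow [DecidableEq ι] {R : Type*} [CommSemiring R] (a b : R) :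
    ∑ x : ι → Bool, a ^ numTrue x * b ^ (Fintype.card ι - numTrue x) =
      (a + b) ^ Fintype.card ι := by
  calc ∑ x : ι → Bool, a ^ numTrue x * b ^ (Fintype.card ι - numTrue x)
      = ∑ x : ι → Bool, ∏ i, (if x i then a else b) := by
        refine sum_congr rfl fun x _ => ?_
        rw [prod_ite_eq_pow_mul_pow]
    _ = (a + b) ^ Fintype.card ι := by
        rw [← Fintype.prod_sum fun (_ : ι) (j : Bool) => if j then a else b]
        simp

theorem numTrue_eq_zero_iff {x : ι → Bool} : numTrue x = 0 ↔ x = fun _ => false := by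
  simp [numTrue, funext_iff]

theorem numTrue_eq_card_iff {x : ι → Bool} : numTrue x = Fintype.card ι ↔ x = fun _ => true := by
  simp [numTrue, ← Finset.card_univ, card_filter_eq_iff, funext_iff]

@[simp]
theorem numTrue_const_false : numTrue (fun _ : ι => false) = 0 :=
  numTrue_eq_zero_iff.2 rfl

@[simp]
theorem numTrue_const_true : numTrue (fun _ : ι => true) = Fintype.card ι :=
  numTrue_eq_card_iff.2 rfl

end Cube

theorem integral_pow_mul_one_sub_pow (a b : ℕ) :
    ∫ p in (0 : ℝ)..1, p ^ a * (1 - p) ^ b = (a ! * b ! : ℝ) / (a + b + 1)! := by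
  have hΓ := Complex.Gamma_mul_Gamma_eq_betaIntegral (s := a + 1) (t := b + 1)
    (by simp; positivity) (by simp; positivity)
  rw [show (a + 1 + (b + 1) : ℂ) = (a + b + 1 : ℕ) + 1 by push_cast; ring,
    Complex.Gamma_nat_eq_factorial, Complex.Gamma_nat_eq_factorial,
    Complex.Gamma_nat_eq_factorial, Complex.betaIntegral] at hΓ
  simp only [add_sub_cancel_right, Complex.cpow_natCast] at hΓ
  apply Complex.ofReal_injective
  rw [← intervalIntegral.integral_ofReal]
  push_cast
  rw [hΓ, mul_div_cancel_left₀ _ (by exact_mod_cast (a + b + 1).factorial_ne_zero)]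

theorem integral_pow_mul_one_sub_pow_nonneg {δ : ℝ} (hδ0 : 0 ≤ δ) (hδ1 : δ ≤ 1) (a b : ℕ) :
    0 ≤ ∫ p in (0 : ℝ)..δ, p ^ a * (1 - p) ^ b :=
  intervalIntegral.integral_nonneg hδ0 fun p hp =>
    mul_nonneg (pow_nonneg hp.1 a) (pow_nonneg (by linarith [hp.2]) b)

theorem integral_pow_mul_one_sub_pow_le {δ : ℝ} (hδ0 : 0 ≤ δ) (hδ1 : δ ≤ 1) (a b : ℕ) :
    ∫ p in (0 : ℝ)..δ, p ^ a * (1 - p) ^ b ≤ δ ^ (a + 1) :=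
  calc ∫ p in (0 : ℝ)..δ, p ^ a * (1 - p) ^ b
      ≤ ∫ p in (0 : ℝ)..δ, p ^ a := by
        refine intervalIntegral.integral_mono_on hδ0
          ((by fun_prop : Continuous _).intervalIntegrable _ _)
          ((by fun_prop : Continuous _).intervalIntegrable _ _) fun p hp => ?_
        exact mul_le_of_le_one_right (pow_nonneg hp.1 a)
          (pow_le_one₀ (by linarith [hp.2]) (by linarith [hp.1]))
    _ = δ ^ (a + 1) / (a + 1) := by simp [integral_pow]
    _ ≤ δ ^ (a + 1) := div_le_self (by positivity) (by simp)

theorem abs_integral_sub_integral_pow_mul_one_sub_pow_le {δ : ℝ} (hδ0 : 0 ≤ δ) (hδ1 : δ ≤ 1)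
    (a b : ℕ) :
    |(∫ p in (0 : ℝ)..1, p ^ a * (1 - p) ^ b) - ∫ p in δ..1 - δ, p ^ a * (1 - p) ^ b| ≤
      δ ^ (a + 1) + δ ^ (b + 1) := by
  have hint : ∀ s t : ℝ, IntervalIntegrable (fun p : ℝ => p ^ a * (1 - p) ^ b) volume s t :=
    fun s t => by apply Continuous.intervalIntegrable; fun_prop
  have hsplit : (∫ p in (0 : ℝ)..1, p ^ a * (1 - p) ^ b) - ∫ p in δ..1 - δ, p ^ a * (1 - p) ^ b =
      (∫ p in (0 : ℝ)..δ, p ^ a * (1 - p) ^ b) + ∫ p in 1 - δ..1, p ^ a * (1 - p) ^ b := by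
    rw [← intervalIntegral.integral_add_adjacent_intervals (hint 0 δ) (hint δ 1),
      ← intervalIntegral.integral_add_adjacent_intervals (hint δ (1 - δ)) (hint (1 - δ) 1)]
    ring
  have hreflect :
      ∫ p in 1 - δ..1, p ^ a * (1 - p) ^ b = ∫ p in (0 : ℝ)..δ, p ^ b * (1 - p) ^ a := by
    simpa [mul_comm, eq_comm] using
      intervalIntegral.integral_comp_sub_left (fun p : ℝ => p ^ a * (1 - p) ^ b) (a := 0) (b := δ) 1
  rw [hsplit, hreflect, abs_of_nonneg (add_nonneg (integral_pow_mul_one_sub_pow_nonneg hδ0 hδ1 a b)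
    (integral_pow_mul_one_sub_pow_nonneg hδ0 hδ1 b a))]
  exact add_le_add (integral_pow_mul_one_sub_pow_le hδ0 hδ1 a b)
    (integral_pow_mul_one_sub_pow_le hδ0 hδ1 b a)

theorem inv_add_inv_div_choose (a b : ℕ) :
    (((a + 1 : ℕ) : ℝ)⁻¹ + ((b + 1 : ℕ) : ℝ)⁻¹) / ((a + b + 2).choose (a + 1) : ℝ) =
      a ! * b ! / (a + b + 1)! := by
  rw [show a + b + 2 = (a + 1) + (b + 1) by ring, Nat.cast_add_choose,
    show a + 1 + (b + 1) = (a + b + 1) + 1 by ring]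
  simp only [Nat.factorial_succ]
  push_cast
  field_simp
  ring

theorem one_div_add_one_div_one_sub_mul {p : ℝ} (hp0 : p ≠ 0) (hp1 : 1 - p ≠ 0) (a b : ℕ) :
    (1 / p + 1 / (1 - p)) * (p ^ (a + 1) * (1 - p) ^ (b + 1)) = p ^ a * (1 - p) ^ b := by
  field_simp
  ring

theorem uIcc_one_sub_subset_Ioo {δ : ℝ} (hδ0 : 0 < δ) (hδ1 : δ < 1) :
    Set.uIcc δ (1 - δ) ⊆ Set.Ioo 0 1 := fun p hp => by
  rcases Set.mem_uIcc.1 hp with h | h <;> constructor <;> linarith [h.1, h.2]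

theorem LambdaN_nonneg (n : ℕ) : 0 ≤ LambdaN n :=
  sum_nonneg fun k hk => by
    have : (k : ℝ) < n := by exact_mod_cast (mem_Ioo.1 hk).2
    have : 0 ≤ (n : ℝ) - k := by linarith
    positivity

theorem one_add_pow_sub_one_le {δ : ℝ} (hδ : 0 ≤ δ) {n : ℕ} (h : n * δ ≤ 1) :
    (1 + δ) ^ n - 1 ≤ 2 * (n * δ) := by
  have hnδ : 0 ≤ n * δ := by positivity
  calc (1 + δ) ^ n - 1 ≤ Real.exp (n * δ) - 1 := by
        rw [Real.exp_nat_mul]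
        gcongr
        linarith [Real.add_one_le_exp δ]
    _ ≤ |Real.exp (n * δ) - 1| := le_abs_self _
    _ ≤ 2 * |n * δ| := Real.abs_exp_sub_one_le (by rwa [abs_of_nonneg hnδ])
    _ = 2 * (n * δ) := by rw [abs_of_nonneg hnδ]

section ShapleyMixture

variable {n : ℕ} {δ : ℝ}

theorem numTrue_le (x : Fin n → Bool) : numTrue x ≤ n := by
  unfold numTrue
  simpa using card_filter_le univ fun i => x i = true

theorem pwt_eq (p : ℝ) (x : Fin n → Bool) :
    pwt p x = p ^ numTrue x * (1 - p) ^ (n - numTrue x) := by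
  unfold pwt
  simpa using prod_ite_eq_pow_mul_pow x p (1 - p)

theorem shapWt_eq_integral_div (x : Fin n → Bool) {a b : ℕ} (ha : numTrue x = a + 1)
    (hn : n = a + b + 2) :
    shapWt x = (∫ p in (0 : ℝ)..1, p ^ a * (1 - p) ^ b) / LambdaN n := by
  change (if numTrue x = 0 ∨ numTrue x = n then 0 else
    (((numTrue x : ℝ))⁻¹ + ((n : ℝ) - numTrue x)⁻¹) / (LambdaN n * (n.choose (numTrue x) : ℝ))) = _
  rw [if_neg (by omega), integral_pow_mul_one_sub_pow, ← inv_add_inv_div_choose, ha, div_div,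
    mul_comm, hn]
  push_cast
  ring_nf

theorem abs_shapWt_sub_integral_le (x : Fin n → Bool) (h0 : numTrue x ≠ 0) (hn : numTrue x ≠ n)
    (hδ0 : 0 < δ) (hδ1 : δ < 1) :
    |shapWt x - ∫ p in δ..1 - δ, (1 / p + 1 / (1 - p)) / LambdaN n * pwt p x| ≤
      (δ ^ numTrue x + δ ^ (n - numTrue x)) / LambdaN n := by
  obtain ⟨a, ha⟩ := Nat.exists_eq_add_one_of_ne_zero h0
  obtain ⟨b, hab⟩ : ∃ b, n = a + b + 2 := ⟨n - a - 2, by have := numTrue_le x; omega⟩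
  have hmid : ∫ p in δ..1 - δ, (1 / p + 1 / (1 - p)) / LambdaN n * pwt p x =
      (∫ p in δ..1 - δ, p ^ a * (1 - p) ^ b) / LambdaN n := by
    rw [← intervalIntegral.integral_div]
    refine intervalIntegral.integral_congr fun p hp => ?_
    obtain ⟨hp0, hp1⟩ := uIcc_one_sub_subset_Ioo hδ0 hδ1 hp
    rw [pwt_eq, ha, show n - (a + 1) = b + 1 by omega, div_mul_eq_mul_div,
      one_div_add_one_div_one_sub_mul hp0.ne' (sub_ne_zero.2 hp1.ne')]
  rw [shapWt_eq_integral_div x ha hab, hmid, ← sub_div, abs_div,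
    abs_of_nonneg (LambdaN_nonneg n), ha, show n - (a + 1) = b + 1 by omega]
  exact div_le_div_of_nonneg_right
    (abs_integral_sub_integral_pow_mul_one_sub_pow_le hδ0.le hδ1.le a b) (LambdaN_nonneg n)

theorem continuous_pwt (x : Fin n → Bool) : Continuous fun p => pwt p x := by
  simp_rw [pwt_eq]
  fun_prop

theorem integral_mul_pExp {g : ℝ → ℝ} {s t : ℝ} (hg : IntervalIntegrable g volume s t)
    (f : (Fin n → ℝ) → ℝ) :
    ∫ p in s..t, g p * pExp p f = ∑ x, f (toSigns x) * ∫ p in s..t, g p * pwt p x := by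
  simp_rw [pExp, mul_sum, ← mul_assoc]
  rw [intervalIntegral.integral_finsetSum fun x _ =>
    (hg.mul_continuousOn (continuous_pwt x).continuousOn).mul_const _]
  refine sum_congr rfl fun x _ => ?_
  rw [intervalIntegral.integral_mul_const, mul_comm]

theorem sum_pow_numTrue_add_pow_le (hδ : 0 ≤ δ) :
    ∑ x ∈ {x : Fin n → Bool | numTrue x ≠ 0 ∧ numTrue x ≠ n},
      (δ ^ numTrue x + δ ^ (n - numTrue x)) ≤ 2 * ((1 + δ) ^ n - 1) := by
  set S : Finset (Fin n → Bool) := {x | numTrue x ≠ 0 ∧ numTrue x ≠ n}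
  have hsum₁ : ∑ x : Fin n → Bool, δ ^ numTrue x = (1 + δ) ^ n := by
    simpa [add_comm] using sum_pow_numTrue_mul_pow (ι := Fin n) δ 1
  have hsum₂ : ∑ x : Fin n → Bool, δ ^ (n - numTrue x) = (1 + δ) ^ n := by
    simpa using sum_pow_numTrue_mul_pow (ι := Fin n) 1 δ
  have hle : ∀ (g : (Fin n → Bool) → ℝ) (x₀ : Fin n → Bool), (∀ x, 0 ≤ g x) → x₀ ∉ S →
      ∑ x ∈ S, g x ≤ ∑ x, g x - g x₀ := fun g x₀ hg hx₀ => by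
    rw [← sum_erase_eq_sub (mem_univ x₀)]
    exact sum_le_sum_of_subset_of_nonneg
      (fun x hx => mem_erase.2 ⟨by rintro rfl; exact hx₀ hx, mem_univ x⟩) fun _ _ _ => hg _
  have h₁ := hle (fun x => δ ^ numTrue x) (fun _ => false) (fun _ => by positivity) (by simp [S])
  have h₂ :=
    hle (fun x => δ ^ (n - numTrue x)) (fun _ => true) (fun _ => by positivity) (by simp [S])
  simp only [hsum₁, hsum₂, numTrue_const_false, numTrue_const_true, Fintype.card_fin,
    Nat.sub_self, pow_zero] at h₁ h₂
  rw [sum_add_distrib]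
  linarith

theorem abs_shapExp_sub_integral_le (hδ0 : 0 < δ) (hδ1 : δ < 1) (f : (Fin n → ℝ) → ℝ)
    (hf : ∀ x : Fin n → Bool, |f (toSigns x)| ≤ 1) (hf0 : f (fun _ => -1) = 0)
    (hf1 : f (fun _ => 1) = 0) :
    |shapExp f - ∫ p in δ..1 - δ, (1 / p + 1 / (1 - p)) / LambdaN n * pExp p f| ≤
      2 * ((1 + δ) ^ n - 1) / LambdaN n := by
  set S : Finset (Fin n → Bool) := {x | numTrue x ≠ 0 ∧ numTrue x ≠ n}
  have hcont : ContinuousOn (fun p => (1 / p + 1 / (1 - p)) / LambdaN n) (Set.Ioo 0 1) := by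
    fun_prop (disch := grind)
  have hw := (hcont.mono (uIcc_one_sub_subset_Ioo hδ0 hδ1)).intervalIntegrable (μ := volume)
  have hconst : ∀ x ∉ S, f (toSigns x) = 0 := fun x hx => by
    simp only [S, mem_filter, mem_univ, true_and, not_and_or, not_not] at hx
    rcases hx with hx | hx
    · rw [numTrue_eq_zero_iff.1 hx]; exact hf0
    · rw [numTrue_eq_card_iff.1 (hx.trans (Fintype.card_fin n).symm)]; exact hf1
  rw [integral_mul_pExp hw, shapExp, ← sum_sub_distrib,
    ← sum_subset (subset_univ S) fun x _ hx => by rw [hconst x hx]; ring]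
  calc |∑ x ∈ S, (shapWt x * f (toSigns x) -
          f (toSigns x) * ∫ p in δ..1 - δ, (1 / p + 1 / (1 - p)) / LambdaN n * pwt p x)|
      ≤ ∑ x ∈ S, (δ ^ numTrue x + δ ^ (n - numTrue x)) / LambdaN n := by
        refine (abs_sum_le_sum_abs _ _).trans (sum_le_sum fun x hx => ?_)
        simp only [S, mem_filter, mem_univ, true_and] at hx
        rw [mul_comm, ← mul_sub, abs_mul]
        exact (mul_le_of_le_one_left (abs_nonneg _) (hf x)).trans
          (abs_shapWt_sub_integral_le x hx.1 hx.2 hδ0 hδ1)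
    _ ≤ 2 * ((1 + δ) ^ n - 1) / LambdaN n := by
        rw [← sum_div]
        exact div_le_div_of_nonneg_right (sum_pow_numTrue_add_pow_le hδ0.le) (LambdaN_nonneg n)

end ShapleyMixture

/-- the truncated mixture of `p`-biased product distributions approximates
expectations under the Shapley distribution. -/
theorem shapley_mixture_approximation :
    ∀ c : ℝ, 1 < c →
      ∃ C : ℝ, 0 < C ∧
        ∀ (n : ℕ) (f : (Fin n → ℝ) → ℝ),
          2 ≤ n →
          (∀ x : Fin n → Bool, |f (toSigns x)| ≤ 1) →
          f (fun _ => -1) = 0 →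
          f (fun _ => 1) = 0 →
          |shapExp f -
              ∫ p in ((n : ℝ) ^ (-c))..(1 - (n : ℝ) ^ (-c)),
                ((1 / p + 1 / (1 - p)) / LambdaN n) * pExp p f| ≤
            C * (n : ℝ) * ((n : ℝ) ^ (-c)) / LambdaN n := by
  intro c hc
  refine ⟨4, by norm_num, fun n f hn hf hf0 hf1 => ?_⟩
  have hn1 : (1 : ℝ) < n := by exact_mod_cast hn
  have hδ0 : 0 < (n : ℝ) ^ (-c) := Real.rpow_pos_of_pos (by linarith) _
  have hδ1 : (n : ℝ) ^ (-c) < 1 := Real.rpow_lt_one_of_one_lt_of_neg hn1 (by linarith)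
  have hnδ : n * (n : ℝ) ^ (-c) ≤ 1 := by
    rw [← Real.rpow_one_add' (by positivity) (by linarith)]
    exact Real.rpow_le_one_of_one_le_of_nonpos hn1.le (by linarith)
  calc _ ≤ 2 * ((1 + (n : ℝ) ^ (-c)) ^ n - 1) / LambdaN n :=
        abs_shapExp_sub_integral_le hδ0 hδ1 f hf hf0 hf1
    _ ≤ 4 * n * (n : ℝ) ^ (-c) / LambdaN n := by
        refine div_le_div_of_nonneg_right ?_ (LambdaN_nonneg n)
        linarith [one_add_pow_sub_one_le hδ0.le hnδ]
end

section
/- Let w = (w_1, …, w_n) ∈ ℝ^n satisfy |w_1| ≥ |w_2| ≥ … ≥ |w_n| > 0, let τ ∈ (0,1), and let c(w, τ) be the τ-critical index of w. Then for all integers a, b with 1 ≤ a ≤ b and b ≤ min(n, c(w, τ)), it holds that tail_b(w) ≤ (1 − τ²)^{(b−a)/2} · tail_a(w), where tail_k(w) := ( Σ_{i=k}^n w_i² )^{1/2}; moreover the inequality is strict when a < b. -/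
open Finset MeasureTheory

noncomputable section

/-- `tail_k(w) = (Σ_{i=k}^n w_i²)^{1/2}` for a 1-indexed position `k` (`w` is indexed by
`Fin n`, with coordinate `i` corresponding to the 1-indexed position `i+1`). -/
def tailNorm {n : ℕ} (w : Fin n → ℝ) (k : ℕ) : ℝ :=
  Real.sqrt (∑ i : Fin n, if k ≤ i.val + 1 then w i ^ 2 else 0)

/-- The `τ`-critical index of `w` (1-indexed): the smallest index `i ∈ [n]` with
`|w_i| ≤ τ·tail_i(w)`, or `∞` if there is no such index. -/
def critIndex {n : ℕ} (w : Fin n → ℝ) (τ : ℝ) : ℕ∞ :=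
  sInf {m : ℕ∞ | ∃ i : Fin n, m = ((i.val + 1 : ℕ) : ℕ∞) ∧
    |w i| ≤ τ * tailNorm w (i.val + 1)}

/-- the tail norm decreases geometrically below the critical index. -/
theorem tail_geometric_decrease :
    ∀ (n : ℕ) (w : Fin n → ℝ) (τ : ℝ),
      τ ∈ Set.Ioo (0 : ℝ) 1 →
      (∀ i : Fin n, w i ≠ 0) →
      (∀ i j : Fin n, i ≤ j → |w j| ≤ |w i|) →
      ∀ a b : ℕ, 1 ≤ a → a ≤ b → (b : ℕ∞) ≤ min (n : ℕ∞) (critIndex w τ) →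
        tailNorm w b ≤ (1 - τ ^ 2) ^ (((b : ℝ) - (a : ℝ)) / 2) * tailNorm w a ∧
        (a < b → tailNorm w b < (1 - τ ^ 2) ^ (((b : ℝ) - (a : ℝ)) / 2) * tailNorm w a) := by
  intro n w τ hτ hw0 hmono a b ha hab hb
  obtain ⟨hτ0, hτ1⟩ := hτ
  have h1τ : 0 < 1 - τ ^ 2 := by nlinarith
  set s := Real.sqrt (1 - τ ^ 2) with hs
  have hs0 : 0 < s := Real.sqrt_pos.mpr h1τ
  -- nonnegativity of the sums
  have hSnn : ∀ k : ℕ, 0 ≤ ∑ i : Fin n, if k ≤ i.val + 1 then w i ^ 2 else 0 := by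
    intro k
    apply Finset.sum_nonneg
    intro i _
    split <;> positivity
  have htnn : ∀ k : ℕ, 0 ≤ tailNorm w k := fun k => Real.sqrt_nonneg _
  -- the key step
  have step : ∀ k : ℕ, 1 ≤ k → k ≤ n → ((k : ℕ∞) < critIndex w τ) →
      tailNorm w (k + 1) < s * tailNorm w k := by
    intro k hk1 hkn hkc
    have hklt : k - 1 < n := by omega
    set i : Fin n := ⟨k - 1, hklt⟩ with hi
    have hi1 : i.val + 1 = k := by simp [hi]; omega
    have hnot : ¬ (|w i| ≤ τ * tailNorm w k) := by
      intro h
      have hmem : ((k : ℕ) : ℕ∞) ∈ {m : ℕ∞ | ∃ j : Fin n, m = ((j.val + 1 : ℕ) : ℕ∞) ∧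
          |w j| ≤ τ * tailNorm w (j.val + 1)} := ⟨i, by rw [hi1], by rw [hi1]; exact h⟩
      have := sInf_le hmem
      rw [critIndex] at hkc
      exact absurd this (not_le.mpr hkc)
    push_neg at hnot
    -- decompose the sum
    set Sk := ∑ j : Fin n, if k ≤ j.val + 1 then w j ^ 2 else 0 with hSk
    set Sk1 := ∑ j : Fin n, if k + 1 ≤ j.val + 1 then w j ^ 2 else 0 with hSk1
    have hdecomp : Sk = w i ^ 2 + Sk1 := by
      have : ∀ j : Fin n, (if k ≤ j.val + 1 then w j ^ 2 else 0) =
          (if j = i then w j ^ 2 else 0) + (if k + 1 ≤ j.val + 1 then w j ^ 2 else 0) := by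
        intro j
        rcases eq_or_ne j i with rfl | hne
        · simp [hi1, show ¬ (k + 1 ≤ k) by omega, show k ≤ k by omega]
        · have hjv : j.val ≠ k - 1 := fun h => hne (Fin.ext h)
          have : ¬ (j.val + 1 = k) := by omega
          rcases le_or_gt (k+1) (j.val+1) with h | h
          · simp [hne, h, show k ≤ j.val + 1 by omega]
          · simp [hne, show ¬ (k + 1 ≤ j.val + 1) by omega, show ¬ (k ≤ j.val + 1) by omega]
      rw [hSk, Finset.sum_congr rfl (fun j _ => this j), Finset.sum_add_distrib,
        Finset.sum_ite_eq' Finset.univ i (fun j => w j ^ 2)]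
      simp [hSk1]
    have htk : tailNorm w k = Real.sqrt Sk := rfl
    have htk1 : tailNorm w (k + 1) = Real.sqrt Sk1 := rfl
    have hsq : τ ^ 2 * Sk < w i ^ 2 := by
      have h1 : (τ * Real.sqrt Sk) ^ 2 < |w i| ^ 2 := by
        apply pow_lt_pow_left₀ (htk ▸ hnot) (by positivity) (by norm_num)
      rw [mul_pow, Real.sq_sqrt (hSnn k)] at h1
      rwa [sq_abs] at h1
    have hlt : Sk1 < (1 - τ ^ 2) * Sk := by
      have := hdecomp
      nlinarith
    rw [htk1, htk]
    calc Real.sqrt Sk1 < Real.sqrt ((1 - τ ^ 2) * Sk) :=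
          Real.sqrt_lt_sqrt (hSnn (k+1)) hlt
      _ = s * Real.sqrt Sk := by rw [Real.sqrt_mul h1τ.le]
  -- induction on the gap
  have key : ∀ d a : ℕ, 1 ≤ a → (((a + d : ℕ)) : ℕ∞) ≤ min (n : ℕ∞) (critIndex w τ) →
      tailNorm w (a + d) ≤ s ^ d * tailNorm w a ∧
      (0 < d → tailNorm w (a + d) < s ^ d * tailNorm w a) := by
    intro d
    induction d with
    | zero => intro a ha' _; simp
    | succ d ih =>
      intro a ha' hle
      have hcast : ∀ p q : ℕ, p ≤ q → ((p : ℕ∞) ≤ (q : ℕ∞)) := fun p q h => by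
        exact_mod_cast h
      have hcast' : ∀ p q : ℕ, p < q → ((p : ℕ∞) < (q : ℕ∞)) := fun p q h => by
        exact_mod_cast h
      have hle' : (((a + d : ℕ)) : ℕ∞) ≤ min (n : ℕ∞) (critIndex w τ) :=
        le_trans (hcast _ _ (by omega)) hle
      obtain ⟨hih, _⟩ := ih a ha' hle'
      have hn' : (((a + d + 1 : ℕ)) : ℕ∞) ≤ (n : ℕ∞) := hle.trans (min_le_left _ _)
      have hkn : a + d + 1 ≤ n := by exact_mod_cast hn'
      have hc' : (((a + d + 1 : ℕ)) : ℕ∞) ≤ critIndex w τ := hle.trans (min_le_right _ _)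
      have hkc : (((a + d : ℕ)) : ℕ∞) < critIndex w τ :=
        lt_of_lt_of_le (hcast' _ _ (by omega)) hc'
      have hstep := step (a + d) (by omega) (by omega) hkc
      have h2 : tailNorm w (a + (d + 1)) < s ^ (d + 1) * tailNorm w a := by
        have : tailNorm w (a + (d + 1)) = tailNorm w ((a + d) + 1) := by ring_nf
        rw [this]
        calc tailNorm w ((a + d) + 1) < s * tailNorm w (a + d) := hstep
          _ ≤ s * (s ^ d * tailNorm w a) := by
              exact mul_le_mul_of_nonneg_left hih hs0.le
          _ = s ^ (d + 1) * tailNorm w a := by ring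
      exact ⟨h2.le, fun _ => h2⟩
  -- conclude
  have hd : b = a + (b - a) := by omega
  have hrw : (1 - τ ^ 2) ^ (((b : ℝ) - (a : ℝ)) / 2) = s ^ (b - a) := by
    have h2 : (b : ℝ) - (a : ℝ) = ((b - a : ℕ) : ℝ) := by
      rw [Nat.cast_sub hab]
    rw [h2, hs, Real.sqrt_eq_rpow, ← Real.rpow_natCast ((1 - τ ^ 2) ^ ((1:ℝ)/2)) (b - a),
      ← Real.rpow_mul h1τ.le]
    ring_nf
  obtain ⟨h1, h2⟩ := key (b - a) a ha (by rw [← hd]; exact hb)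
  rw [← hd] at h1 h2
  rw [hrw]
  exact ⟨h1, fun hab' => h2 (by omega)⟩

end
end
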